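/- arXiv:1003.3138 — 3 statements merged into one kernel-verified Lean document; each statement's English description precedes it below -/
import Mathlib

section
/- Let π be an 𝓔-measurable quasi-probability kernel, μ ∈ J_𝓔(π), and h a bounded nonnegative 𝓕-measurable function with ∫ h dμ = 1. Then the probability measure μ·h defined by (μ·h)(F) = ∫_F h dμ belongs to J_𝓔(π) if and only if there exists a bounded nonnegative 𝓔-measurable function h' such that ∫ h·f dμ = ∫ h'·f dμ for every bounded nonnegative 𝓕-measurable f. Moreover, in that case one may take h' = π(h), i.e. h'(x) = ∫ h(y) π(x,dy). -/
open MeasureTheory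
open scoped ENNReal

variable {X : Type*}

/-- A quasi-probability kernel on `(X, mX)`: `π(·,F)` is `mX`-measurable for each
`mX`-measurable `F`, and each `π(x,·)` is a measure with total mass `0` or `1`. -/
def IsQPK (mX : MeasurableSpace X) (π : X → @Measure X mX) : Prop :=
  (∀ F : Set X, MeasurableSet[mX] F → Measurable[mX] fun x => π x F) ∧
    (∀ x : X, π x Set.univ = 0 ∨ π x Set.univ = 1)

/-- The support `S_π = {x : π(x,X) = 1}` of a quasi-probability kernel. -/
def qpkSupp (mX : MeasurableSpace X) (π : X → @Measure X mX) : Set X :=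
  {x | π x Set.univ = 1}

/-- `π` is `𝓔`-measurable: `π(·,F)` is `𝓔`-measurable for each `mX`-measurable `F`. -/
def EMeasK (mX 𝓔 : MeasurableSpace X) (π : X → @Measure X mX) : Prop :=
  ∀ F : Set X, MeasurableSet[mX] F → Measurable[𝓔] fun x => π x F

/-- `J_𝓔(π)`: the set of probability measures `μ` on `(X, mX)` with
`μ(E ∩ F) = ∫_E π(·,F) dμ` for all `E ∈ 𝓔` and `F ∈ mX`. -/
def J (mX 𝓔 : MeasurableSpace X) (π : X → @Measure X mX) : Set (@Measure X mX) :=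
  {μ | IsProbabilityMeasure μ ∧ ∀ E F : Set X, MeasurableSet[𝓔] E → MeasurableSet[mX] F →
      μ (E ∩ F) = ∫⁻ x in E, π x F ∂μ}

/-- `J_⋆(π)`: the set of probability measures `μ` on `(X, mX)` with
`μ(F) = ∫ π(·,F) dμ` for all `F ∈ mX`. -/
def Jstar (mX : MeasurableSpace X) (π : X → @Measure X mX) : Set (@Measure X mX) :=
  {μ | IsProbabilityMeasure μ ∧ ∀ F : Set X, MeasurableSet[mX] F → μ F = ∫⁻ x, π x F ∂μ}

/-- `π` is proper as an `𝓔`-measurable kernel: `π(x, E ∩ F) = 1_E(x)·π(x,F)` for all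
`E ∈ 𝓔`, `F ∈ mX` and `x ∈ X`. -/
def IsProperK (mX 𝓔 : MeasurableSpace X) (π : X → @Measure X mX) : Prop :=
  ∀ E F : Set X, MeasurableSet[𝓔] E → MeasurableSet[mX] F → ∀ x : X,
    π x (E ∩ F) = Set.indicator E (fun _ => π x F) x

/-- `μ` is trivial on `𝓔` if `μ(E) ∈ {0,1}` for every `E ∈ 𝓔`. -/
def IsTrivialOn (mX 𝓔 : MeasurableSpace X) (μ : @Measure X mX) : Prop :=
  ∀ E : Set X, MeasurableSet[𝓔] E → μ E = 0 ∨ μ E = 1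

/-- `π` is adapted if `π(x,·) ∈ J_𝓔(π)` for every `x ∈ S_π`. -/
def IsAdaptedK (mX 𝓔 : MeasurableSpace X) (π : X → @Measure X mX) : Prop :=
  ∀ x ∈ qpkSupp mX π, π x ∈ J mX 𝓔 π

/-- `π` is normal if it is adapted and `π(x,·)` is trivial on `𝓔` for every `x ∈ S_π`. -/
def IsNormalK (mX 𝓔 : MeasurableSpace X) (π : X → @Measure X mX) : Prop :=
  IsAdaptedK mX 𝓔 π ∧ ∀ x ∈ qpkSupp mX π, IsTrivialOn mX 𝓔 (π x)

/-- The restriction of `π` to `D`: the kernel `ρ(x,F) = 1_D(x)·π(x,F)`. -/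
noncomputable def kerRestrict (mX : MeasurableSpace X) (π : X → @Measure X mX) (D : Set X) :
    X → @Measure X mX :=
  Set.indicator D π

/-- `ρ` is a refinement of `π`: an `𝓔`-measurable quasi-probability kernel which is the
restriction of `π` to some `D ∈ 𝓔` and satisfies `J_𝓔(ρ) = J_𝓔(π)`. -/
def IsRefinement (mX 𝓔 : MeasurableSpace X) (π ρ : X → @Measure X mX) : Prop :=
  IsQPK mX ρ ∧ EMeasK mX 𝓔 ρ ∧ (∃ D : Set X, MeasurableSet[𝓔] D ∧ ρ = kerRestrict mX π D) ∧
    J mX 𝓔 ρ = J mX 𝓔 π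

/-- `Δ^π_μ = {x ∈ S_π : π(x,·) = μ}`. -/
def DeltaM (mX : MeasurableSpace X) (π : X → @Measure X mX) (μ : @Measure X mX) : Set X :=
  {x ∈ qpkSupp mX π | π x = μ}

/-- `Δ^π_x = {y ∈ S_π : π(y,·) = π(x,·)}`. -/
def Delta (mX : MeasurableSpace X) (π : X → @Measure X mX) (x : X) : Set X :=
  {y ∈ qpkSupp mX π | π y = π x}

/-- `𝓝_π`: the σ-algebra of `mX`-measurable sets `N` such that for every `x ∈ S_π` either
`Δ^π_x ⊆ N` or `Δ^π_x ∩ N = ∅`. -/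
def NSigma (mX : MeasurableSpace X) (π : X → @Measure X mX) : MeasurableSpace X where
  MeasurableSet' N := MeasurableSet[mX] N ∧
    ∀ x ∈ qpkSupp mX π, Delta mX π x ⊆ N ∨ Delta mX π x ∩ N = ∅
  measurableSet_empty :=
    ⟨@MeasurableSet.empty X mX, fun _ _ => Or.inr (Set.inter_empty _)⟩
  measurableSet_compl := by
    rintro N ⟨hN, h⟩
    refine ⟨hN.compl, fun x hx => ?_⟩
    rcases h x hx with h1 | h1
    · refine Or.inr ?_
      ext y
      simp only [Set.mem_inter_iff, Set.mem_compl_iff, Set.mem_empty_iff_false, iff_false,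
        not_and, not_not]
      exact fun hy => h1 hy
    · exact Or.inl fun y hy hyN => (Set.eq_empty_iff_forall_notMem.1 h1) y ⟨hy, hyN⟩
  measurableSet_iUnion := by
    intro f hf
    refine ⟨MeasurableSet.iUnion fun i => (hf i).1, fun x hx => ?_⟩
    by_cases hc : ∃ i, Delta mX π x ⊆ f i
    · rcases hc with ⟨i, hi⟩
      exact Or.inl (hi.trans (Set.subset_iUnion f i))
    · push_neg at hc
      refine Or.inr ?_
      ext y
      simp only [Set.mem_inter_iff, Set.mem_iUnion, Set.mem_empty_iff_false, iff_false, not_and]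
      rintro hy ⟨i, hyi⟩
      rcases (hf i).2 x hx with h1 | h1
      · exact hc i h1
      · exact (Set.eq_empty_iff_forall_notMem.1 h1) y ⟨hy, hyi⟩

/-- `𝓢_π`: the least σ-algebra making all the functions `π(·,F)`, `F ∈ mX`, measurable,
i.e. the σ-algebra generated by these functions. -/
def Spi (mX : MeasurableSpace X) (π : X → @Measure X mX) : MeasurableSpace X :=
  ⨆ F ∈ {F : Set X | MeasurableSet[mX] F},
    MeasurableSpace.comap (fun x => π x F) inferInstance

/-! Membership `μ ∈ J_𝓔(π)` says that `μ.restrict F` and `μ.withDensity π(·,F)` agree on `𝓔`.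
Integrating an `𝓔`-measurable weight `ψ` against this gives `(ψ μ).bind π = ψ μ`, that is
`∫ ψ f dμ = ∫ ψ π(f) dμ`. If `h μ ∈ J_𝓔(π)`, applying this to `h μ` with `ψ = 1` and to `μ`
with `ψ = π(f)` and `ψ = π(h)` gives `∫ h f dμ = ∫ π(f) h dμ = ∫ π(f) π(h) dμ = ∫ π(h) f dμ`.
Conversely, the identity for indicators `f = 1_S` says `h μ = h' μ`, and a density that is
`𝓔`-measurable never takes `μ` out of `J_𝓔(π)`. -/

section Kernel

variable {𝓔 : MeasurableSpace X} [mX : MeasurableSpace X] {π : X → Measure X}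

lemma EMeasK.measurable (hπE : EMeasK mX 𝓔 π) : Measurable[𝓔] π :=
  @Measure.measurable_of_measurable_coe X X mX 𝓔 π hπE

lemma EMeasK.measurable_lintegral (hπE : EMeasK mX 𝓔 π) {f : X → ℝ≥0∞} (hf : Measurable f) :
    Measurable[𝓔] fun x => ∫⁻ y, f y ∂(π x) :=
  (Measure.measurable_lintegral hf).comp hπE.measurable

lemma IsQPK.lintegral_le {f : X → ℝ≥0∞} {C : ℝ≥0∞} (hπ : IsQPK mX π) (hf : ∀ x, f x ≤ C)
    (x : X) : ∫⁻ y, f y ∂(π x) ≤ C :=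
  calc ∫⁻ y, f y ∂(π x) ≤ ∫⁻ _, C ∂(π x) := lintegral_mono hf
    _ = C * π x Set.univ := lintegral_const C
    _ ≤ C := by rcases hπ.2 x with h0 | h0 <;> simp [h0]

lemma setLIntegral_eq_lintegral_mul_of_mem_J (h𝓔 : 𝓔 ≤ mX) {μ : Measure X}
    (hμ : μ ∈ J mX 𝓔 π) {F : Set X} (hF : MeasurableSet F) (hπF : Measurable fun x => π x F)
    {ψ : X → ℝ≥0∞} (hψ : Measurable[𝓔] ψ) :
    ∫⁻ x in F, ψ x ∂μ = ∫⁻ x, ψ x * π x F ∂μ := by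
  have htrim : (μ.restrict F).trim h𝓔 = (μ.withDensity fun x => π x F).trim h𝓔 := by
    refine @Measure.ext _ 𝓔 _ _ fun E hE => ?_
    rw [trim_measurableSet_eq h𝓔 hE, trim_measurableSet_eq h𝓔 hE,
      Measure.restrict_apply (h𝓔 E hE), withDensity_apply _ (h𝓔 E hE)]
    exact hμ.2 E F hE hF
  calc ∫⁻ x in F, ψ x ∂μ = ∫⁻ x, ψ x ∂((μ.restrict F).trim h𝓔) := (lintegral_trim h𝓔 hψ).symm
    _ = ∫⁻ x, ψ x ∂(μ.withDensity fun x => π x F) := by rw [htrim, lintegral_trim h𝓔 hψ]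
    _ = ∫⁻ x, ψ x * π x F ∂μ := by
      rw [lintegral_withDensity_eq_lintegral_mul μ hπF (hψ.mono h𝓔 le_rfl)]
      simp_rw [Pi.mul_apply, mul_comm]

lemma withDensity_bind_eq_of_mem_J (h𝓔 : 𝓔 ≤ mX) (hπE : EMeasK mX 𝓔 π) {μ : Measure X}
    (hμ : μ ∈ J mX 𝓔 π) {ψ : X → ℝ≥0∞} (hψ : Measurable[𝓔] ψ) :
    (μ.withDensity ψ).bind π = μ.withDensity ψ := by
  have hπ : Measurable π := hπE.measurable.mono h𝓔 le_rfl
  ext F hF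
  have hπF : Measurable fun x => π x F := (Measure.measurable_coe hF).comp hπ
  rw [Measure.bind_apply hF hπ.aemeasurable, withDensity_apply _ hF,
    lintegral_withDensity_eq_lintegral_mul _ (hψ.mono h𝓔 le_rfl) hπF]
  exact (setLIntegral_eq_lintegral_mul_of_mem_J h𝓔 hμ hF hπF hψ).symm

lemma lintegral_mul_eq_lintegral_mul_lintegral_of_mem_J (h𝓔 : 𝓔 ≤ mX) (hπE : EMeasK mX 𝓔 π)
    {μ : Measure X} (hμ : μ ∈ J mX 𝓔 π) {ψ : X → ℝ≥0∞} (hψ : Measurable[𝓔] ψ)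
    {f : X → ℝ≥0∞} (hf : Measurable f) :
    ∫⁻ x, ψ x * f x ∂μ = ∫⁻ x, ψ x * ∫⁻ y, f y ∂(π x) ∂μ := by
  have hψm : Measurable ψ := hψ.mono h𝓔 le_rfl
  calc ∫⁻ x, ψ x * f x ∂μ = ∫⁻ x, f x ∂(μ.withDensity ψ) :=
        (lintegral_withDensity_eq_lintegral_mul _ hψm hf).symm
    _ = ∫⁻ x, f x ∂((μ.withDensity ψ).bind π) := by rw [withDensity_bind_eq_of_mem_J h𝓔 hπE hμ hψ]
    _ = ∫⁻ x, ∫⁻ y, f y ∂(π x) ∂(μ.withDensity ψ) :=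
        Measure.lintegral_bind (hπE.measurable.mono h𝓔 le_rfl).aemeasurable hf.aemeasurable
    _ = ∫⁻ x, ψ x * ∫⁻ y, f y ∂(π x) ∂μ :=
        lintegral_withDensity_eq_lintegral_mul _ hψm ((hπE.measurable_lintegral hf).mono h𝓔 le_rfl)

lemma withDensity_mem_J (h𝓔 : 𝓔 ≤ mX) (hπE : EMeasK mX 𝓔 π) {μ : Measure X}
    (hμ : μ ∈ J mX 𝓔 π) {ψ : X → ℝ≥0∞} (hψ : Measurable[𝓔] ψ)
    (hψμ : IsProbabilityMeasure (μ.withDensity ψ)) : μ.withDensity ψ ∈ J mX 𝓔 π := by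
  refine ⟨hψμ, fun E F hE hF => ?_⟩
  have hEm : MeasurableSet E := h𝓔 E hE
  have hπF : Measurable fun x => π x F := (hπE F hF).mono h𝓔 le_rfl
  calc μ.withDensity ψ (E ∩ F) = ∫⁻ x in E ∩ F, ψ x ∂μ := withDensity_apply _ (hEm.inter hF)
    _ = ∫⁻ x in F, E.indicator ψ x ∂μ := (setLIntegral_indicator hEm ψ).symm
    _ = ∫⁻ x, E.indicator ψ x * π x F ∂μ :=
        setLIntegral_eq_lintegral_mul_of_mem_J h𝓔 hμ hF hπF (hψ.indicator hE)
    _ = ∫⁻ x, E.indicator (fun x => ψ x * π x F) x ∂μ := by simp_rw [Set.indicator_mul_left]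
    _ = ∫⁻ x in E, ψ x * π x F ∂μ := lintegral_indicator hEm _
    _ = ∫⁻ x in E, π x F ∂(μ.withDensity ψ) :=
        (setLIntegral_withDensity_eq_setLIntegral_mul _ (hψ.mono h𝓔 le_rfl) hπF hEm).symm

lemma lintegral_mul_eq_lintegral_lintegral_mul_of_withDensity_mem_J (h𝓔 : 𝓔 ≤ mX)
    (hπE : EMeasK mX 𝓔 π) {μ : Measure X} (hμ : μ ∈ J mX 𝓔 π) {h : X → ℝ≥0∞}
    (hh : Measurable h) (hμh : μ.withDensity h ∈ J mX 𝓔 π) {f : X → ℝ≥0∞} (hf : Measurable f) :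
    ∫⁻ x, h x * f x ∂μ = ∫⁻ x, (∫⁻ y, h y ∂(π x)) * f x ∂μ := by
  have hπfE := hπE.measurable_lintegral hf
  have hπhE := hπE.measurable_lintegral hh
  calc ∫⁻ x, h x * f x ∂μ = ∫⁻ x, f x ∂(μ.withDensity h) :=
        (lintegral_withDensity_eq_lintegral_mul _ hh hf).symm
    _ = ∫⁻ x, ∫⁻ y, f y ∂(π x) ∂(μ.withDensity h) := by
        simpa using lintegral_mul_eq_lintegral_mul_lintegral_of_mem_J h𝓔 hπE hμh
          (ψ := fun _ => 1) measurable_const hf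
    _ = ∫⁻ x, (∫⁻ y, f y ∂(π x)) * h x ∂μ := by
        rw [lintegral_withDensity_eq_lintegral_mul _ hh (hπfE.mono h𝓔 le_rfl)]
        simp_rw [Pi.mul_apply, mul_comm]
    _ = ∫⁻ x, (∫⁻ y, f y ∂(π x)) * ∫⁻ y, h y ∂(π x) ∂μ :=
        lintegral_mul_eq_lintegral_mul_lintegral_of_mem_J h𝓔 hπE hμ hπfE hh
    _ = ∫⁻ x, (∫⁻ y, h y ∂(π x)) * f x ∂μ := by
        rw [lintegral_mul_eq_lintegral_mul_lintegral_of_mem_J h𝓔 hπE hμ hπhE hf]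
        simp_rw [mul_comm]

lemma withDensity_eq_of_lintegral_mul_eq {μ : Measure X}
    {h h' : X → ℝ≥0∞} (hhh' : ∀ f : X → ℝ≥0∞, Measurable f → (∃ C : ℝ≥0∞, C ≠ ⊤ ∧ ∀ x, f x ≤ C) →
      ∫⁻ x, h x * f x ∂μ = ∫⁻ x, h' x * f x ∂μ) :
    μ.withDensity h = μ.withDensity h' := by
  ext S hS
  have hS1 := hhh' (S.indicator 1) (measurable_one.indicator hS)
    ⟨1, ENNReal.one_ne_top, fun x => Set.indicator_le_self' (fun _ _ => zero_le_one) x⟩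
  simp_rw [← Set.indicator_mul_right S _ (1 : X → ℝ≥0∞), Pi.one_apply, mul_one] at hS1
  rwa [withDensity_apply _ hS, withDensity_apply _ hS, ← lintegral_indicator hS,
    ← lintegral_indicator hS]

end Kernel

theorem stmt15_general (mX : MeasurableSpace X)
    (𝓔 : MeasurableSpace X) (h𝓔 : 𝓔 ≤ mX)
    (π : X → @Measure X mX) (hπ : IsQPK mX π) (hπE : EMeasK mX 𝓔 π)
    (μ : @Measure X mX) (hμ : μ ∈ J mX 𝓔 π)
    (h : X → ℝ≥0∞) (hhm : Measurable[mX] h) (hhb : ∃ C : ℝ≥0∞, C ≠ ⊤ ∧ ∀ x, h x ≤ C)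
    (hh1 : ∫⁻ x, h x ∂μ = 1) :
    (μ.withDensity h ∈ J mX 𝓔 π ↔
        ∃ h' : X → ℝ≥0∞, Measurable[𝓔] h' ∧ (∃ C : ℝ≥0∞, C ≠ ⊤ ∧ ∀ x, h' x ≤ C) ∧
          ∀ f : X → ℝ≥0∞, Measurable[mX] f → (∃ C : ℝ≥0∞, C ≠ ⊤ ∧ ∀ x, f x ≤ C) →
            ∫⁻ x, h x * f x ∂μ = ∫⁻ x, h' x * f x ∂μ) ∧
      (μ.withDensity h ∈ J mX 𝓔 π →
        ∀ f : X → ℝ≥0∞, Measurable[mX] f → (∃ C : ℝ≥0∞, C ≠ ⊤ ∧ ∀ x, f x ≤ C) →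
          ∫⁻ x, h x * f x ∂μ = ∫⁻ x, (∫⁻ y, h y ∂(π x)) * f x ∂μ) := by
  let _ : MeasurableSpace X := mX
  obtain ⟨C, hC, hhC⟩ := hhb
  have hπh : μ.withDensity h ∈ J mX 𝓔 π → ∀ f : X → ℝ≥0∞, Measurable[mX] f →
      (∃ C : ℝ≥0∞, C ≠ ⊤ ∧ ∀ x, f x ≤ C) →
        ∫⁻ x, h x * f x ∂μ = ∫⁻ x, (∫⁻ y, h y ∂(π x)) * f x ∂μ := fun hμh f hf _ =>
    lintegral_mul_eq_lintegral_lintegral_mul_of_withDensity_mem_J h𝓔 hπE hμ hhm hμh hf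
  refine ⟨⟨fun hμh => ⟨_, hπE.measurable_lintegral hhm, ⟨C, hC, hπ.lintegral_le hhC⟩, hπh hμh⟩,
    ?_⟩, hπh⟩
  rintro ⟨h', hh'E, -, hhh'⟩
  have hμh : IsProbabilityMeasure (μ.withDensity h) :=
    ⟨by rw [withDensity_apply _ MeasurableSet.univ, Measure.restrict_univ, hh1]⟩
  rw [withDensity_eq_of_lintegral_mul_eq hhh'] at hμh ⊢
  exact withDensity_mem_J h𝓔 hπE hμ hh'E hμh

/-- for `μ ∈ J_𝓔(π)` and bounded measurable `h ≥ 0` with `∫ h dμ = 1`, the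
probability measure `μ·h` (given by `(μ·h)(F) = ∫_F h dμ`, i.e. `μ.withDensity h`) lies in
`J_𝓔(π)` iff there is a bounded `𝓔`-measurable `h'` with `∫ h·f dμ = ∫ h'·f dμ` for all
bounded measurable `f`; moreover in that case one may take `h' = π(h)`. -/
theorem stmt15 (mX : MeasurableSpace X) (hCG : @MeasurableSpace.CountablyGenerated X mX)
    (𝓔 : MeasurableSpace X) (h𝓔 : 𝓔 ≤ mX)
    (π : X → @Measure X mX) (hπ : IsQPK mX π) (hπE : EMeasK mX 𝓔 π)
    (μ : @Measure X mX) (hμ : μ ∈ J mX 𝓔 π)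
    (h : X → ℝ≥0∞) (hhm : Measurable[mX] h) (hhb : ∃ C : ℝ≥0∞, C ≠ ⊤ ∧ ∀ x, h x ≤ C)
    (hh1 : ∫⁻ x, h x ∂μ = 1) :
    (μ.withDensity h ∈ J mX 𝓔 π ↔
        ∃ h' : X → ℝ≥0∞, Measurable[𝓔] h' ∧ (∃ C : ℝ≥0∞, C ≠ ⊤ ∧ ∀ x, h' x ≤ C) ∧
          ∀ f : X → ℝ≥0∞, Measurable[mX] f → (∃ C : ℝ≥0∞, C ≠ ⊤ ∧ ∀ x, f x ≤ C) →
            ∫⁻ x, h x * f x ∂μ = ∫⁻ x, h' x * f x ∂μ) ∧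
      (μ.withDensity h ∈ J mX 𝓔 π →
        ∀ f : X → ℝ≥0∞, Measurable[mX] f → (∃ C : ℝ≥0∞, C ≠ ⊤ ∧ ∀ x, f x ≤ C) →
          ∫⁻ x, h x * f x ∂μ = ∫⁻ x, (∫⁻ y, h y ∂(π x)) * f x ∂μ) :=
  stmt15_general mX 𝓔 h𝓔 π hπ hπE μ hμ h hhm hhb hh1
end

section
/- If π is a proper 𝓔-measurable quasi-probability kernel, then the trace σ-algebra 𝓔|_{S_π} on the support S_π is countably generated. -/
open MeasureTheory
open scoped ENNReal

variable {X : Type*}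

/-!
On the support `S_π`, properness gives `π(x, E) = 1_E(x)` for `E ∈ 𝓔`, so the trace of `𝓔` on
`S_π` is the σ-algebra generated by `x ↦ π(x, ·)`, i.e. the pullback of the Giry σ-algebra. As
every `π(x, ·)` with `x ∈ S_π` is a probability measure, it is determined by its values on a
countable generating π-system of `𝓕`, so those countably many evaluations generate the pullback.
-/

theorem Set.Countable.generatePiSystem {α : Type*} {S : Set (Set α)} (hS : S.Countable) :
    (generatePiSystem S).Countable := by
  refine ((Set.countable_ofPred_finite_subset hS).image Set.sInter).mono fun t ht => ?_
  induction ht with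
  | base h =>
    exact ⟨{_}, ⟨Set.finite_singleton _, Set.singleton_subset_iff.2 h⟩, Set.sInter_singleton _⟩
  | inter _ _ _ ih₁ ih₂ =>
    obtain ⟨T₁, ⟨hT₁, hT₁S⟩, rfl⟩ := ih₁
    obtain ⟨T₂, ⟨hT₂, hT₂S⟩, rfl⟩ := ih₂
    exact ⟨T₁ ∪ T₂, ⟨hT₁.union hT₂, Set.union_subset hT₁S hT₂S⟩, Set.sInter_union T₁ T₂⟩

namespace MeasurableSpace

theorem exists_countable_isPiSystem_generateFrom_eq {α : Type*} [m : MeasurableSpace α]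
    [h : CountablyGenerated α] :
    ∃ S : Set (Set α), S.Countable ∧ IsPiSystem S ∧ m = generateFrom S := by
  obtain ⟨b, hb, rfl⟩ := h.isCountablyGenerated
  exact ⟨generatePiSystem b, hb.generatePiSystem, isPiSystem_generatePiSystem b,
    generateFrom_generatePiSystem_eq.symm⟩

theorem countablyGenerated_comap_of_isProbabilityMeasure {α β : Type*} [MeasurableSpace α]
    [CountablyGenerated α] (κ : β → Measure α) [∀ b, IsProbabilityMeasure (κ b)] :
    @CountablyGenerated β (MeasurableSpace.comap κ inferInstance) := by
  obtain ⟨S, hS, hpi, hgen⟩ := exists_countable_isPiSystem_generateFrom_eq (α := α)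
  have := hS.to_subtype
  let ev : Measure α → S → ℝ≥0∞ := fun μ s => μ s
  have hev : Measurable ev := measurable_pi_iff.2 fun s =>
    Measure.measurable_coe (hgen ▸ measurableSet_generateFrom s.2)
  have hκ : Measurable[MeasurableSpace.comap (ev ∘ κ) inferInstance] κ :=
    @Measurable.measure_of_isPiSystem_of_isProbabilityMeasure _ _ _ (_) κ _ S hgen hpi
      fun s hs => (measurable_pi_apply (⟨s, hs⟩ : S)).comp (comap_measurable (ev ∘ κ))
  have hcomap : MeasurableSpace.comap κ inferInstance =
      MeasurableSpace.comap (ev ∘ κ) inferInstance :=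
    le_antisymm hκ.comap_le (by rw [← comap_comp]; exact comap_mono hev.comap_le)
  rw [hcomap]
  exact .comap _

end MeasurableSpace

section ProperKernel

variable {mX 𝓔 : MeasurableSpace X} {π : X → @Measure X mX}

theorem IsProperK.mem_iff_apply_eq_one (hprop : IsProperK mX 𝓔 π) {E : Set X}
    (hE : MeasurableSet[𝓔] E) {x : X} (hx : x ∈ qpkSupp mX π) : x ∈ E ↔ π x E = 1 := by
  have h := hprop E Set.univ hE MeasurableSet.univ x
  rw [Set.inter_univ, show π x Set.univ = 1 from hx] at h
  by_cases hxE : x ∈ E <;> simp [h, hxE]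

theorem IsProperK.comap_val_qpkSupp_eq (hprop : IsProperK mX 𝓔 π) (h𝓔 : 𝓔 ≤ mX)
    (hπE : EMeasK mX 𝓔 π) :
    MeasurableSpace.comap (Subtype.val : qpkSupp mX π → X) 𝓔 =
      MeasurableSpace.comap (fun x : qpkSupp mX π => π x) (@Measure.instMeasurableSpace X mX) := by
  refine le_antisymm ?_ (Measurable.comap_le ?_)
  · rintro _ ⟨E, hE, rfl⟩
    have hpre : Subtype.val ⁻¹' E = (fun x : qpkSupp mX π => π x E) ⁻¹' {1} :=
      Set.ext fun x => hprop.mem_iff_apply_eq_one hE x.2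
    rw [hpre]
    exact ((Measure.measurable_coe (h𝓔 E hE)).comp (comap_measurable _))
      (measurableSet_singleton 1)
  · exact Measure.measurable_of_measurable_coe _ fun F hF =>
      (hπE F hF).comp (comap_measurable Subtype.val)

end ProperKernel

theorem stmt16_general (mX : MeasurableSpace X) (hCG : @MeasurableSpace.CountablyGenerated X mX)
    (𝓔 : MeasurableSpace X) (h𝓔 : 𝓔 ≤ mX)
    (π : X → @Measure X mX) (hπE : EMeasK mX 𝓔 π)
    (hprop : IsProperK mX 𝓔 π) :
    @MeasurableSpace.CountablyGenerated (↥(qpkSupp mX π))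
      (MeasurableSpace.comap (Subtype.val : qpkSupp mX π → X) 𝓔) := by
  have hprob : ∀ x : qpkSupp mX π, IsProbabilityMeasure (π x) := fun x => ⟨x.2⟩
  rw [hprop.comap_val_qpkSupp_eq h𝓔 hπE]
  exact @MeasurableSpace.countablyGenerated_comap_of_isProbabilityMeasure _ _ mX hCG _ hprob

/-- if `π` is proper then the trace σ-algebra `𝓔|_{S_π}` is countably
generated. -/
theorem stmt16 (mX : MeasurableSpace X) (hCG : @MeasurableSpace.CountablyGenerated X mX)
    (𝓔 : MeasurableSpace X) (h𝓔 : 𝓔 ≤ mX)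
    (π : X → @Measure X mX) (hπ : IsQPK mX π) (hπE : EMeasK mX 𝓔 π)
    (hprop : IsProperK mX 𝓔 π) :
    @MeasurableSpace.CountablyGenerated (↥(qpkSupp mX π))
      (MeasurableSpace.comap (Subtype.val : qpkSupp mX π → X) 𝓔) :=
  stmt16_general mX hCG 𝓔 h𝓔 π hπE hprop
end

section
/- Suppose (X, 𝓕) is a standard Borel space. Let {𝓔_n}_{n≥1} be a decreasing sequence of sub-σ-algebras of 𝓕 with each 𝓔_n countably generated, and let μ be a probability measure on (X, 𝓕). Then for each n ≥ 1 there exists a proper 𝓔_n-measurable quasi-probability kernel ρ_n such that ρ_n ρ_m = ρ_n whenever m ≤ n and μ ∈ J_{𝓔_n}(ρ_n) for all n ≥ 1. -/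
open MeasureTheory
open scoped ENNReal

variable {X : Type*}

/-!
The kernels are the conditional expectation kernels `κₙ` of `μ` given `𝓔 n`, restricted to
suitable sets `Gₙ ∈ 𝓔 n` of full measure. Two kernels are `μ.trim`-a.e. equal once their
composition-products with `μ.trim` agree on rectangles; this shows that for a.e. `x` the measure
`κₙ(x,·)` agrees with `δₓ` on the countably generated `𝓔 n`, and that `κₘ κₙ(x,·) = κₙ(x,·)`
for `m ≤ n`. Being `μ.trim`-null, the exceptional sets are avoided by sets `Kₙ ∈ 𝓔 n` of full
measure. With `L = ⋂ₙ Kₙ`, the sets `Gₙ = Kₙ ∩ {x | κₙ(x, Lᶜ) = 0}` are absorbing: if `x ∈ Gₙ`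
and `m ≤ n`, then `κₘ(y, Lᶜ) = 0` for `κₙ(x,·)`-a.e. `y` by the tower property, so `κₙ(x,·)` is
carried by `Gₘ`. Restricting `κₙ` to `Gₙ` therefore makes the tower property hold everywhere.
-/

open ProbabilityTheory
open scoped ENNReal

namespace ProbabilityTheory

variable {Ω : Type*} {m m₁ m₂ mΩ : MeasurableSpace Ω} [StandardBorelSpace Ω]
  {μ : Measure Ω} [IsFiniteMeasure μ]

lemma setLIntegral_lintegral_condExpKernel (hm : m ≤ mΩ) {s : Set Ω} (hs : MeasurableSet[m] s)
    {f : Ω → ℝ≥0∞} (hf : Measurable f) :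
    ∫⁻ ω in s, ∫⁻ y, f y ∂(condExpKernel μ m ω) ∂(μ.trim hm) = ∫⁻ ω in s, f ω ∂μ := by
  have hdiag : Measurable[mΩ, m.prod mΩ] Function.diag :=
    (measurable_id'' hm).prodMk measurable_id
  calc ∫⁻ ω in s, ∫⁻ y, f y ∂(condExpKernel μ m ω) ∂(μ.trim hm)
      = ∫⁻ p in s ×ˢ Set.univ, f p.2 ∂((μ.trim hm) ⊗ₘ condExpKernel μ m) := by
        rw [Measure.setLIntegral_compProd (f := fun p => f p.2) (hf.comp measurable_snd) hs
          MeasurableSet.univ]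
        simp only [Measure.restrict_univ]
    _ = ∫⁻ ω in s, f ω ∂μ := by
        rw [compProd_trim_condExpKernel, @setLIntegral_map Ω (Ω × Ω) mΩ (m.prod mΩ) μ
          (fun p => f p.2) _ _ (hs.prod MeasurableSet.univ) (hf.comp measurable_snd) hdiag]
        simp [Set.preimage, Function.diag]

lemma setLIntegral_condExpKernel_trim (hm : m ≤ mΩ) {s t : Set Ω} (hs : MeasurableSet[m] s)
    (ht : MeasurableSet t) :
    ∫⁻ ω in s, condExpKernel μ m ω t ∂(μ.trim hm) = μ (s ∩ t) := by
  simpa [lintegral_indicator ht, Measure.restrict_apply ht, Set.inter_comm] using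
    setLIntegral_lintegral_condExpKernel hm hs (measurable_one.indicator ht) (μ := μ)

lemma setLIntegral_condExpKernel (hm : m ≤ mΩ) {s t : Set Ω} (hs : MeasurableSet[m] s)
    (ht : MeasurableSet t) :
    ∫⁻ ω in s, condExpKernel μ m ω t ∂μ = μ (s ∩ t) := by
  rw [← setLIntegral_trim hm (measurable_condExpKernel ht) hs,
    setLIntegral_condExpKernel_trim hm hs ht]

lemma ae_trim_condExpKernel_apply_eq_indicator (hm : m ≤ mΩ)
    [@MeasurableSpace.CountablyGenerated Ω m] :
    ∀ᵐ ω ∂(μ.trim hm), ∀ s, MeasurableSet[m] s → condExpKernel μ m ω s = s.indicator 1 ω := by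
  have hid : Measurable[mΩ, m] id := measurable_id'' hm
  have hae : ⇑(@Kernel.map Ω Ω m mΩ Ω m (condExpKernel μ m) id) =ᵐ[μ.trim hm]
      Kernel.deterministic id measurable_id := by
    refine Kernel.ae_eq_of_compProd_eq (Measure.ext_prod fun {s t} hs ht => ?_)
    rw [Measure.compProd_apply_prod hs ht, Measure.compProd_apply_prod hs ht]
    simp_rw [Kernel.map_apply' _ hid _ ht, Kernel.deterministic_apply' measurable_id _ ht,
      Set.preimage_id, id]
    rw [setLIntegral_condExpKernel_trim hm hs (hm t ht), lintegral_indicator_const ht, one_mul,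
      Measure.restrict_apply ht, trim_measurableSet_eq hm (ht.inter hs), Set.inter_comm]
  filter_upwards [hae] with ω hω s hs
  have := congr($hω s)
  rwa [Kernel.map_apply' _ hid _ hs, Kernel.deterministic_apply' measurable_id _ hs] at this

lemma ae_trim_lintegral_condExpKernel_condExpKernel (h₁₂ : m₁ ≤ m₂) (hm₂ : m₂ ≤ mΩ) :
    ∀ᵐ ω ∂(μ.trim (h₁₂.trans hm₂)), ∀ t, MeasurableSet t →
      ∫⁻ y, condExpKernel μ m₂ y t ∂(condExpKernel μ m₁ ω) = condExpKernel μ m₁ ω t := by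
  have hm₁ := h₁₂.trans hm₂
  have hid : Measurable[mΩ, m₂] id := measurable_id'' hm₂
  have hae : ⇑((Kernel.comap (condExpKernel μ m₂) id hid) ∘ₖ condExpKernel μ m₁)
      =ᵐ[μ.trim hm₁] condExpKernel μ m₁ := by
    refine Kernel.ae_eq_of_compProd_eq (Measure.ext_prod fun {s t} hs ht => ?_)
    rw [Measure.compProd_apply_prod hs ht, Measure.compProd_apply_prod hs ht]
    simp_rw [Kernel.comp_apply' _ _ _ ht, Kernel.comap_apply', id]
    rw [setLIntegral_lintegral_condExpKernel hm₁ hs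
        ((measurable_condExpKernel ht).mono hm₂ le_rfl),
      setLIntegral_condExpKernel hm₂ (h₁₂ s hs) ht, setLIntegral_condExpKernel_trim hm₁ hs ht]
  filter_upwards [hae] with ω hω t ht
  have := congr($hω t)
  rwa [Kernel.comp_apply' _ _ _ ht] at this

end ProbabilityTheory

lemma indicator_measure_apply {α β : Type*} [MeasurableSpace β] {G : Set α}
    {κ : α → Measure β} (x : α) (t : Set β) :
    G.indicator κ x t = G.indicator (fun y => κ y t) x := by
  by_cases hx : x ∈ G <;> simp [hx]

lemma lintegral_indicator_indicator_apply {α : Type*} [MeasurableSpace α] {κ η : α → Measure α}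
    {G G' : Set α} (habsorb : ∀ x ∈ G, ∀ᵐ y ∂(κ x), y ∈ G')
    (htower : ∀ x ∈ G, ∀ t, MeasurableSet t → ∫⁻ y, η y t ∂(κ x) = κ x t)
    (x : α) {t : Set α} (ht : MeasurableSet t) :
    ∫⁻ y, G'.indicator η y t ∂(G.indicator κ x) = G.indicator κ x t := by
  by_cases hx : x ∈ G
  · simp only [Set.indicator_of_mem hx]
    rw [← htower x hx t ht]
    exact lintegral_congr_ae ((habsorb x hx).mono fun y hy => by simp [hy])
  · simp [hx]

section RestrictedKernel

-- `𝓔` is declared before `mX` so that `mX` is the instance found by type class search.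
variable {𝓔 : MeasurableSpace X} [mX : MeasurableSpace X]

lemma mem_J_condExpKernel [StandardBorelSpace X] (h𝓔 : 𝓔 ≤ mX) (μ : Measure X)
    [IsProbabilityMeasure μ] : μ ∈ J mX 𝓔 (condExpKernel μ 𝓔) :=
  ⟨inferInstance, fun _ _ hs ht => (setLIntegral_condExpKernel h𝓔 hs ht).symm⟩

lemma mem_J_indicator_of_ae_mem {κ : X → Measure X} {μ : Measure X} (hμ : μ ∈ J mX 𝓔 κ)
    {G : Set X} (hG : ∀ᵐ x ∂μ, x ∈ G) : μ ∈ J mX 𝓔 (G.indicator κ) := by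
  refine ⟨hμ.1, fun s t hs ht => ?_⟩
  rw [hμ.2 s t hs ht]
  exact lintegral_congr_ae (ae_restrict_of_ae (hG.mono fun x hx => by simp [hx]))

lemma eMeasK_indicator (κ : @Kernel X X 𝓔 mX) {G : Set X} (hG : MeasurableSet[𝓔] G) :
    EMeasK mX 𝓔 (G.indicator κ) := by
  intro t ht
  simp_rw [indicator_measure_apply]
  exact (κ.measurable_coe ht).indicator hG

lemma isQPK_indicator (h𝓔 : 𝓔 ≤ mX) (κ : @Kernel X X 𝓔 mX) [IsMarkovKernel κ] {G : Set X}
    (hG : MeasurableSet[𝓔] G) : IsQPK mX (G.indicator κ) := by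
  refine ⟨fun t ht => (eMeasK_indicator κ hG t ht).mono h𝓔 le_rfl, fun x => ?_⟩
  by_cases hx : x ∈ G <;> simp [hx]

lemma isProperK_indicator (h𝓔 : 𝓔 ≤ mX) (κ : @Kernel X X 𝓔 mX) [IsMarkovKernel κ] {G : Set X}
    (hproper : ∀ x ∈ G, ∀ s, MeasurableSet[𝓔] s → κ x s = s.indicator 1 x) :
    IsProperK mX 𝓔 (G.indicator κ) := by
  intro s t hs _ x
  by_cases hx : x ∈ G
  · simp only [Set.indicator_of_mem hx]
    by_cases hxs : x ∈ s
    · have hsc : κ x sᶜ = 0 := by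
        rw [prob_compl_eq_zero_iff (h𝓔 s hs), hproper x hx s hs, Set.indicator_of_mem hxs,
          Pi.one_apply]
      rw [Set.indicator_of_mem hxs, Set.inter_comm, measure_inter_conull hsc]
    · rw [Set.indicator_of_notMem hxs]
      refine measure_inter_null_of_null_left t ?_
      rw [hproper x hx s hs, Set.indicator_of_notMem hxs]
  · simp [hx]

end RestrictedKernel

lemma exists_absorbing_conull_subsets {𝓔 : ℕ → MeasurableSpace X} [mX : MeasurableSpace X]
    (h𝓔 : ∀ n, 𝓔 n ≤ mX) (κ : ∀ n, @Kernel X X (𝓔 n) mX) {μ : Measure X}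
    (hμ : ∀ n, μ ∈ J mX (𝓔 n) (κ n)) {K : ℕ → Set X} (hKm : ∀ n, MeasurableSet[𝓔 n] (K n))
    (hKμ : ∀ n, ∀ᵐ x ∂μ, x ∈ K n)
    (htower : ∀ n, ∀ x ∈ K n, ∀ m ≤ n, ∀ t, MeasurableSet t →
      ∫⁻ y, κ m y t ∂(κ n x) = κ n x t) :
    ∃ G : ℕ → Set X, (∀ n, G n ⊆ K n) ∧ (∀ n, MeasurableSet[𝓔 n] (G n)) ∧
      (∀ n, ∀ᵐ x ∂μ, x ∈ G n) ∧ ∀ n, ∀ x ∈ G n, ∀ m ≤ n, ∀ᵐ y ∂(κ n x), y ∈ G m := by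
  set L := ⋂ n, K n
  have hLm : MeasurableSet L := MeasurableSet.iInter fun n => h𝓔 n _ (hKm n)
  have hLμ : μ Lᶜ = 0 :=
    mem_ae_iff.1 <| (ae_all_iff.2 hKμ).mono fun _ hx => Set.mem_iInter.2 hx
  have hκL : ∀ n, Measurable[𝓔 n] fun x => κ n x Lᶜ := fun n => (κ n).measurable_coe hLm.compl
  refine ⟨fun n => K n ∩ {x | κ n x Lᶜ = 0}, fun n => Set.inter_subset_left,
    fun n => (hKm n).inter (hκL n (measurableSet_singleton 0)), fun n => ?_, ?_⟩
  · have h := (hμ n).2 Set.univ Lᶜ MeasurableSet.univ hLm.compl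
    rw [Set.univ_inter, hLμ, Measure.restrict_univ, eq_comm,
      lintegral_eq_zero_iff ((hκL n).mono (h𝓔 n) le_rfl)] at h
    filter_upwards [hKμ n, h] with x hxK hxL using ⟨hxK, hxL⟩
  · rintro n x ⟨hxK, hxL⟩ m hmn
    have h := htower n x hxK m hmn Lᶜ hLm.compl
    rw [hxL, lintegral_eq_zero_iff ((hκL m).mono (h𝓔 m) le_rfl)] at h
    filter_upwards [mem_ae_iff.2 hxL, h] with y hyL hy using ⟨Set.mem_iInter.1 hyL m, hy⟩

/-- on a standard Borel space, for a decreasing sequence of countably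
generated sub-σ-algebras `𝓔 n` and a probability measure `μ`, there exist proper
`𝓔 n`-measurable quasi-probability kernels `ρ n` with `ρ n ρ m = ρ n` for `m ≤ n` and
`μ ∈ J_{𝓔 n}(ρ n)` for all `n`. -/
theorem stmt19 [mX : MeasurableSpace X] [StandardBorelSpace X]
    (𝓔 : ℕ → MeasurableSpace X) (h𝓔 : ∀ n, 𝓔 n ≤ mX) (hdec : Antitone 𝓔)
    (hcg : ∀ n, @MeasurableSpace.CountablyGenerated X (𝓔 n))
    (μ : @Measure X mX) (hμ : IsProbabilityMeasure μ) :
    ∃ ρ : ℕ → X → @Measure X mX, ∀ n,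
      IsQPK mX (ρ n) ∧ EMeasK mX (𝓔 n) (ρ n) ∧ IsProperK mX (𝓔 n) (ρ n) ∧
        (∀ m ≤ n, ∀ x : X, ∀ F : Set X, MeasurableSet[mX] F →
          ∫⁻ y, ρ m y F ∂(ρ n x) = ρ n x F) ∧
        μ ∈ J mX (𝓔 n) (ρ n) := by
  set κ : ∀ n, @Kernel X X (𝓔 n) mX := fun n => condExpKernel μ (𝓔 n)
  have hregular : ∀ n, ∀ᵐ x ∂(μ.trim (h𝓔 n)),
      (∀ s, MeasurableSet[𝓔 n] s → κ n x s = s.indicator 1 x) ∧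
      ∀ m ≤ n, ∀ t, MeasurableSet t → ∫⁻ y, κ m y t ∂(κ n x) = κ n x t := fun n =>
    (ae_trim_condExpKernel_apply_eq_indicator (h𝓔 n)).and <|
      (ae_ball_iff (Set.to_countable (Set.Iic n))).2 fun m hm =>
        ae_trim_lintegral_condExpKernel_condExpKernel (hdec hm) (h𝓔 m)
  choose K hKae hKm hK using fun n =>
    @Filter.Eventually.exists_measurable_mem X (𝓔 n) _ _ _ (hregular n)
  obtain ⟨G, hGK, hGm, hGμ, hGabsorb⟩ := exists_absorbing_conull_subsets h𝓔 κ
    (fun n => mem_J_condExpKernel (h𝓔 n) μ) hKm (fun n => ae_of_ae_trim (h𝓔 n) (hKae n))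
    fun n x hx => (hK n x hx).2
  refine ⟨fun n => (G n).indicator (κ n), fun n => ⟨isQPK_indicator (h𝓔 n) (κ n) (hGm n),
    eMeasK_indicator (κ n) (hGm n), isProperK_indicator (h𝓔 n) (κ n) fun x hx => ?_,
    fun m hm x t ht => ?_, mem_J_indicator_of_ae_mem (mem_J_condExpKernel (h𝓔 n) μ) (hGμ n)⟩⟩
  · exact (hK n x (hGK n hx)).1
  · exact lintegral_indicator_indicator_apply (fun x hx => hGabsorb n x hx m hm)
      (fun x hx => (hK n x (hGK n hx)).2 m hm) x ht
end
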